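/- Let d be an (⊙,∨)-derivation on the standard MV-algebra I = [0,1]. Then the following are equivalent: (1) d is the identity map on I; (2) d(1) = 1; (3) there exists a ∈ I with d(a) = 1; (4) d is surjective; (5) d is a (⊕,∧)-derivation, i.e. d(x ⊕ y) = min(d(x) ⊕ y, x ⊕ d(y)) for all x, y ∈ I. -/
import Mathlib


/-- Łukasiewicz strong conjunction `x ⊙ y = max 0 (x + y - 1)` on the unit interval. -/
noncomputable def od (x y : unitInterval) : unitInterval :=
  ⟨max 0 (x.1 + y.1 - 1),
    ⟨le_max_left _ _, max_le zero_le_one (by have := x.2.2; have := y.2.2; linarith)⟩⟩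

/-- Łukasiewicz strong disjunction `x ⊕ y = min 1 (x + y)` on the unit interval. -/
noncomputable def op (x y : unitInterval) : unitInterval :=
  ⟨min 1 (x.1 + y.1),
    ⟨le_min zero_le_one (by have := x.2.1; have := y.2.1; linarith), min_le_left _ _⟩⟩

/-- `d` is an `(⊙,∨)`-derivation on the standard MV-algebra `[0,1]`:
`d (x ⊙ y) = (d x ⊙ y) ∨ (x ⊙ d y)` for all `x, y`. -/
def IsOdotDer (d : unitInterval → unitInterval) : Prop :=
  ∀ x y : unitInterval, d (od x y) = max (od (d x) y) (od x (d y))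

lemma od_zero_right (z : unitInterval) : od z 0 = 0 := by
  apply Subtype.ext
  simp only [od, Set.Icc.coe_zero]
  have := z.2.2
  simp only [max_eq_left_iff]
  norm_num
  linarith

lemma od_zero_left (z : unitInterval) : od 0 z = 0 := by
  apply Subtype.ext
  simp only [od, Set.Icc.coe_zero]
  have := z.2.2
  simp only [max_eq_left_iff]
  norm_num
  linarith

lemma der_zero {d : unitInterval → unitInterval} (hd : IsOdotDer d) : d 0 = 0 := by
  have h := hd 0 0
  rw [od_zero_right] at h
  rw [h, od_zero_right, od_zero_left, max_self]

lemma der_le {d : unitInterval → unitInterval} (hd : IsOdotDer d) (x : unitInterval) :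
    d x ≤ x := by
  have h := hd x (unitInterval.symm x)
  have hxy : od x (unitInterval.symm x) = 0 := by
    apply Subtype.ext
    simp only [od, unitInterval.coe_symm_eq, Set.Icc.coe_zero]
    simp only [max_eq_left_iff]
    linarith
  rw [hxy, der_zero hd] at h
  have h1 : od (d x) (unitInterval.symm x) ≤ 0 := by
    rw [h]; exact le_max_left _ _
  have h2 : (od (d x) (unitInterval.symm x)).1 ≤ 0 := h1
  simp only [od, unitInterval.coe_symm_eq] at h2
  rw [← Subtype.coe_le_coe]
  have h3 : (d x).1 + (1 - x.1) - 1 ≤ 0 := le_trans (le_max_right _ _) h2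
  linarith

lemma der_ge {d : unitInterval → unitInterval} (hd : IsOdotDer d) (h1 : d 1 = 1)
    (x : unitInterval) : x ≤ d x := by
  have hx1 : od x 1 = x := by
    apply Subtype.ext
    simp only [od, Set.Icc.coe_one]
    have := x.2.1
    rw [max_eq_right (by linarith)]
    ring
  have h := hd x 1
  rw [hx1, h1, hx1] at h
  rw [h]
  exact le_max_right _ _

theorem stmt6 (d : unitInterval → unitInterval) (hd : IsOdotDer d) :
    List.TFAE
      [d = id,
       d 1 = 1,
       ∃ a : unitInterval, d a = 1,
       Function.Surjective d,
       ∀ x y : unitInterval, d (op x y) = min (op (d x) y) (op x (d y))] := by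
  tfae_have 1 → 2 := by rintro rfl; rfl
  tfae_have 2 → 1 := by
    intro h1
    funext x
    exact le_antisymm (der_le hd x) (der_ge hd h1 x)
  tfae_have 2 → 3 := fun h => ⟨1, h⟩
  tfae_have 3 → 2 := by
    rintro ⟨a, ha⟩
    have h1 : (1 : unitInterval) ≤ a := ha ▸ der_le hd a
    have h2 : a = 1 := le_antisymm (Subtype.coe_le_coe.mp (by exact_mod_cast a.2.2)) h1
    rw [h2] at ha; exact ha
  tfae_have 1 → 4 := by rintro rfl; exact Function.surjective_id
  tfae_have 4 → 3 := fun h => h 1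
  tfae_have 1 → 5 := by
    rintro rfl
    intro x y
    simp
  tfae_have 5 → 2 := by
    intro h
    have hop : ∀ z : unitInterval, op z 1 = 1 := by
      intro z
      apply Subtype.ext
      simp only [op, Set.Icc.coe_one]
      have := z.2.1
      simp only [min_eq_left_iff]
      linarith
    have hop' : ∀ z : unitInterval, op 1 z = 1 := by
      intro z
      apply Subtype.ext
      simp only [op, Set.Icc.coe_one]
      have := z.2.1
      simp only [min_eq_left_iff]
      linarith
    have h11 := h 1 1
    rw [hop, hop, hop'] at h11
    rw [h11, min_self]
  tfae_finish
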